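/- Let G, ψ, f_HL be as in the Hopf-Lax setting: G symmetric non-negative definite with entries ≥ m/d² > 0 and ψ : ℝ_{≥0}^d → ℝ Lipschitz with constant L in the normalized ℓ^1 norm. Then for every t > 0, the map x ↦ f_HL(t,x) is Lipschitz with constant at most L in the normalized ℓ^1 norm, and for all t > s ≥ 0 and x ∈ ℝ_{≥0}^d, 0 ≤ f_HL(t,x) − f_HL(s,x) ≤ (L²/(2m))(t − s). -/

import Mathlib

/-- The normalized ℓ^1 norm on ℝ^d: ‖x‖_1 = (1/d)∑_k |x_k|. -/
noncomputable def norm1 (d : ℕ) (x : Fin d → ℝ) : ℝ := (1 / (d : ℝ)) * ∑ k, |x k|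

/-- The Hopf-Lax function f_HL(t,x) = sup_{y ≥ 0} { ψ(x+y) − ‖y‖_G²/(2t) } for t > 0,
with f_HL(0,x) = ψ(x). -/
noncomputable def fHL (d : ℕ) (G : Matrix (Fin d) (Fin d) ℝ) (ψ : (Fin d → ℝ) → ℝ)
    (t : ℝ) (x : Fin d → ℝ) : ℝ :=
  if 0 < t then
    sSup {r : ℝ | ∃ y : Fin d → ℝ, (∀ i, 0 ≤ y i) ∧
      r = ψ (x + y) - (∑ i, G.mulVec y i * y i) / (2 * t)}
  else ψ x

/-!
Both estimates rest on one bound for the quantity maximised in `fHL`: on the cone `y ≥ 0` the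
entrywise lower bound on `G` gives `‖y‖_G² ≥ m ‖y‖₁²`, so by the Lipschitz property
`ψ (x + y) - ‖y‖_G² / (2τ) ≤ ψ x + L ‖y‖₁ - m ‖y‖₁² / (2τ) ≤ ψ x + L² τ / (2m)`.
This makes the supremum finite; the Lipschitz bound in `x` then passes through the supremum, and
monotonicity in `t` holds because the cost `‖y‖_G²/(2t)` decreases in `t`. For the increment from `s` to `t`, split a competitor `y` for time
`t` as `(s/t) y + ((t-s)/t) y`: the quadratic costs add up exactly,
`‖y‖_G²/(2t) = ‖(s/t) y‖_G²/(2s) + ‖((t-s)/t) y‖_G²/(2(t-s))`, so the first piece is a competitor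
for time `s` and the second one is controlled by the bound above with `τ = t - s`.
-/

open Matrix

lemma norm1_sub_comm {d : ℕ} (x y : Fin d → ℝ) : norm1 d (x - y) = norm1 d (y - x) := by
  simp only [norm1, Pi.sub_apply, abs_sub_comm]

lemma smul_dotProduct_mulVec_smul {d : ℕ} (G : Matrix (Fin d) (Fin d) ℝ) (c : ℝ)
    (y : Fin d → ℝ) : G *ᵥ (c • y) ⬝ᵥ (c • y) = c ^ 2 * (G *ᵥ y ⬝ᵥ y) := by
  rw [mulVec_smul, smul_dotProduct, dotProduct_smul, smul_eq_mul, smul_eq_mul]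
  ring

lemma dotProduct_mulVec_div_eq_add {d : ℕ} (G : Matrix (Fin d) (Fin d) ℝ) {s t : ℝ}
    (hs : 0 < s) (hst : s < t) (y : Fin d → ℝ) :
    G *ᵥ y ⬝ᵥ y / (2 * t) = G *ᵥ ((s / t) • y) ⬝ᵥ ((s / t) • y) / (2 * s) +
      G *ᵥ (((t - s) / t) • y) ⬝ᵥ (((t - s) / t) • y) / (2 * (t - s)) := by
  have ht : 0 < t := hs.trans hst
  have hts : 0 < t - s := sub_pos.2 hst
  rw [smul_dotProduct_mulVec_smul, smul_dotProduct_mulVec_smul]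
  field_simp
  ring

lemma mul_norm1_sq_le_dotProduct_mulVec {d : ℕ} {m : ℝ} {G : Matrix (Fin d) (Fin d) ℝ}
    (hlow : ∀ k k', m / (d : ℝ) ^ 2 ≤ G k k') {y : Fin d → ℝ} (hy : 0 ≤ y) :
    m * norm1 d y ^ 2 ≤ G *ᵥ y ⬝ᵥ y := by
  have hsum : norm1 d y = 1 / (d : ℝ) * ∑ k, y k := by
    rw [norm1, Finset.sum_congr rfl fun k _ => abs_of_nonneg (hy k)]
  calc m * norm1 d y ^ 2 = ∑ i, ∑ j, m / (d : ℝ) ^ 2 * (y j * y i) := by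
        simp_rw [hsum, ← Finset.mul_sum, ← Finset.sum_mul, ← Finset.mul_sum]
        ring
    _ ≤ ∑ i, ∑ j, G i j * (y j * y i) := by
        gcongr with i _ j _
        · exact mul_nonneg (hy j) (hy i)
        · exact hlow i j
    _ = G *ᵥ y ⬝ᵥ y := by
        simp only [dotProduct, mulVec, Finset.sum_mul, mul_assoc]

lemma mul_sub_mul_sq_div_le {m t : ℝ} (hm : 0 < m) (ht : 0 < t) (L n : ℝ) :
    L * n - m * n ^ 2 / (2 * t) ≤ L ^ 2 * t / (2 * m) := by
  rw [sub_le_iff_le_add, div_add_div _ _ (by positivity) (by positivity),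
    le_div_iff₀ (by positivity)]
  nlinarith [sq_nonneg (m * n - L * t)]

section HopfLax

variable {d : ℕ} {m L : ℝ} {G : Matrix (Fin d) (Fin d) ℝ} {ψ : (Fin d → ℝ) → ℝ}

lemma fHL_zero (x : Fin d → ℝ) : fHL d G ψ 0 x = ψ x :=
  if_neg (lt_irrefl 0)

lemma fHL_le {t c : ℝ} (ht : 0 < t) {x : Fin d → ℝ}
    (h : ∀ y, 0 ≤ y → ψ (x + y) - G *ᵥ y ⬝ᵥ y / (2 * t) ≤ c) : fHL d G ψ t x ≤ c := by
  rw [fHL, if_pos ht]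
  refine csSup_le ⟨_, 0, le_refl (0 : Fin d → ℝ), rfl⟩ ?_
  rintro r ⟨y, hy, rfl⟩
  exact h y hy

variable (hm : 0 < m) (hlow : ∀ k k', m / (d : ℝ) ^ 2 ≤ G k k')
  (hψ : ∀ x x' : Fin d → ℝ, 0 ≤ x → 0 ≤ x' → |ψ x - ψ x'| ≤ L * norm1 d (x - x'))
include hm hlow hψ

lemma sub_dotProduct_mulVec_div_le {τ : ℝ} (hτ : 0 < τ) {x y : Fin d → ℝ} (hx : 0 ≤ x)
    (hy : 0 ≤ y) : ψ (x + y) - G *ᵥ y ⬝ᵥ y / (2 * τ) ≤ ψ x + L ^ 2 * τ / (2 * m) := by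
  have hψy : ψ (x + y) ≤ ψ x + L * norm1 d y := by
    have h := hψ (x + y) x (add_nonneg hx hy) hx
    rw [add_sub_cancel_left] at h
    linarith [le_abs_self (ψ (x + y) - ψ x)]
  have hquad : m * norm1 d y ^ 2 / (2 * τ) ≤ G *ᵥ y ⬝ᵥ y / (2 * τ) := by
    gcongr
    exact mul_norm1_sq_le_dotProduct_mulVec hlow hy
  linarith [mul_sub_mul_sq_div_le hm hτ L (norm1 d y)]

lemma le_fHL {t : ℝ} (ht : 0 < t) {x y : Fin d → ℝ} (hx : 0 ≤ x) (hy : 0 ≤ y) :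
    ψ (x + y) - G *ᵥ y ⬝ᵥ y / (2 * t) ≤ fHL d G ψ t x := by
  rw [fHL, if_pos ht]
  refine le_csSup ⟨ψ x + L ^ 2 * t / (2 * m), ?_⟩ ⟨y, hy, rfl⟩
  rintro r ⟨z, hz, rfl⟩
  exact sub_dotProduct_mulVec_div_le hm hlow hψ ht hx hz

lemma fHL_le_fHL_add_norm1 {t : ℝ} (ht : 0 < t) {x x' : Fin d → ℝ} (hx : 0 ≤ x)
    (hx' : 0 ≤ x') : fHL d G ψ t x ≤ fHL d G ψ t x' + L * norm1 d (x - x') := by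
  refine fHL_le ht fun y hy => ?_
  have h := hψ (x + y) (x' + y) (add_nonneg hx hy) (add_nonneg hx' hy)
  rw [add_sub_add_right_eq_sub] at h
  linarith [le_abs_self (ψ (x + y) - ψ (x' + y)), le_fHL hm hlow hψ ht hx' hy]

lemma abs_fHL_sub_fHL_le {t : ℝ} (ht : 0 < t) {x x' : Fin d → ℝ} (hx : 0 ≤ x)
    (hx' : 0 ≤ x') : |fHL d G ψ t x - fHL d G ψ t x'| ≤ L * norm1 d (x - x') := by
  rw [abs_sub_le_iff]
  constructor
  · linarith [fHL_le_fHL_add_norm1 hm hlow hψ ht hx hx']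
  · have h := fHL_le_fHL_add_norm1 hm hlow hψ ht hx' hx
    rw [norm1_sub_comm] at h
    linarith

lemma fHL_le_fHL {s t : ℝ} (hs : 0 ≤ s) (hst : s < t) {x : Fin d → ℝ} (hx : 0 ≤ x) :
    fHL d G ψ s x ≤ fHL d G ψ t x := by
  have ht : 0 < t := hs.trans_lt hst
  rcases hs.eq_or_lt with rfl | hs
  · simpa [fHL_zero] using le_fHL hm hlow hψ ht hx le_rfl
  refine fHL_le hs fun y hy => ?_
  have hQ : 0 ≤ G *ᵥ y ⬝ᵥ y :=
    (mul_nonneg hm.le (sq_nonneg _)).trans (mul_norm1_sq_le_dotProduct_mulVec hlow hy)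
  have : G *ᵥ y ⬝ᵥ y / (2 * t) ≤ G *ᵥ y ⬝ᵥ y / (2 * s) := by gcongr
  linarith [le_fHL hm hlow hψ ht hx hy]

lemma fHL_le_fHL_add {s t : ℝ} (hs : 0 < s) (hst : s < t) {x : Fin d → ℝ} (hx : 0 ≤ x) :
    fHL d G ψ t x ≤ fHL d G ψ s x + L ^ 2 * (t - s) / (2 * m) := by
  have ht : 0 < t := hs.trans hst
  refine fHL_le ht fun y hy => ?_
  have hcy : 0 ≤ (s / t) • y := smul_nonneg (div_nonneg hs.le ht.le) hy
  have hay : 0 ≤ ((t - s) / t) • y := smul_nonneg (div_nonneg (sub_pos.2 hst).le ht.le) hy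
  have hxy : x + y = x + (s / t) • y + ((t - s) / t) • y := by
    rw [add_assoc, ← add_smul, ← add_div, add_sub_cancel, div_self ht.ne', one_smul]
  have hfirst := le_fHL hm hlow hψ hs hx hcy
  have hsecond := sub_dotProduct_mulVec_div_le hm hlow hψ (sub_pos.2 hst) (add_nonneg hx hcy) hay
  rw [← hxy] at hsecond
  rw [dotProduct_mulVec_div_eq_add G hs hst y]
  linarith

lemma fHL_sub_fHL_le {s t : ℝ} (hs : 0 ≤ s) (hst : s < t) {x : Fin d → ℝ} (hx : 0 ≤ x) :
    fHL d G ψ t x - fHL d G ψ s x ≤ L ^ 2 / (2 * m) * (t - s) := by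
  rw [sub_le_iff_le_add, div_mul_eq_mul_div, add_comm]
  rcases hs.eq_or_lt with rfl | hs
  · rw [fHL_zero]
    exact fHL_le hst fun y hy => by simpa using sub_dotProduct_mulVec_div_le hm hlow hψ hst hx hy
  · exact fHL_le_fHL_add hm hlow hψ hs hst hx

end HopfLax

theorem hopflax_regularity_general (d : ℕ) (m : ℝ) (hm : 0 < m)
    (G : Matrix (Fin d) (Fin d) ℝ)
    (hlow : ∀ k k', m / (d : ℝ) ^ 2 ≤ G k k')
    (ψ : (Fin d → ℝ) → ℝ) (L : ℝ)
    (hψ : ∀ x x' : Fin d → ℝ, (∀ i, 0 ≤ x i) → (∀ i, 0 ≤ x' i) →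
      |ψ x - ψ x'| ≤ L * norm1 d (x - x')) :
    (∀ t : ℝ, 0 < t → ∀ x x' : Fin d → ℝ, (∀ i, 0 ≤ x i) → (∀ i, 0 ≤ x' i) →
        |fHL d G ψ t x - fHL d G ψ t x'| ≤ L * norm1 d (x - x')) ∧
      (∀ s t : ℝ, 0 ≤ s → s < t → ∀ x : Fin d → ℝ, (∀ i, 0 ≤ x i) →
        0 ≤ fHL d G ψ t x - fHL d G ψ s x ∧
          fHL d G ψ t x - fHL d G ψ s x ≤ (L ^ 2 / (2 * m)) * (t - s)) :=
  ⟨fun _ ht _ _ hx hx' => abs_fHL_sub_fHL_le hm hlow hψ ht hx hx',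
    fun _ _ hs hst _ hx => ⟨sub_nonneg.2 (fHL_le_fHL hm hlow hψ hs hst hx),
      fHL_sub_fHL_le hm hlow hψ hs hst hx⟩⟩

/-- Regularity of the Hopf-Lax function: x ↦ f_HL(t,x) is L-Lipschitz in the normalized
ℓ^1 norm for each t > 0, and 0 ≤ f_HL(t,x) − f_HL(s,x) ≤ (L²/(2m))(t−s) for t > s ≥ 0. -/
theorem hopflax_regularity (d : ℕ) (hd : 0 < d) (m : ℝ) (hm : 0 < m)
    (G : Matrix (Fin d) (Fin d) ℝ) (hsym : G.IsSymm)
    (hpsd : ∀ y : Fin d → ℝ, 0 ≤ ∑ i, G.mulVec y i * y i)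
    (hlow : ∀ k k', m / (d : ℝ) ^ 2 ≤ G k k')
    (ψ : (Fin d → ℝ) → ℝ) (L : ℝ) (hL : 0 ≤ L)
    (hψ : ∀ x x' : Fin d → ℝ, (∀ i, 0 ≤ x i) → (∀ i, 0 ≤ x' i) →
      |ψ x - ψ x'| ≤ L * norm1 d (x - x')) :
    (∀ t : ℝ, 0 < t → ∀ x x' : Fin d → ℝ, (∀ i, 0 ≤ x i) → (∀ i, 0 ≤ x' i) →
        |fHL d G ψ t x - fHL d G ψ t x'| ≤ L * norm1 d (x - x')) ∧
      (∀ s t : ℝ, 0 ≤ s → s < t → ∀ x : Fin d → ℝ, (∀ i, 0 ≤ x i) →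
        0 ≤ fHL d G ψ t x - fHL d G ψ s x ∧
          fHL d G ψ t x - fHL d G ψ s x ≤ (L ^ 2 / (2 * m)) * (t - s)) :=
  hopflax_regularity_general d m hm G hlow ψ L hψ
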